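/- Let B be a separable finite-dimensional algebra over a field K. Then A over B is depth two if and only if M_n(A) over M_n(B) is depth two. -/

import Mathlib

open TensorProduct LinearMap

noncomputable section

variable {K : Type*} [CommRing K] {A B : Type*} [Ring A] [Ring B] [Algebra K A] [Algebra K B]

/-- Left multiplication by `a` on the first tensorand of `A ⊗[K] A`. -/
def lmulT (a : A) : A ⊗[K] A →ₗ[K] A ⊗[K] A := rTensor A (mulLeft K a)

/-- Right multiplication by `a` on the second tensorand of `A ⊗[K] A`. -/
def rmulT (a : A) : A ⊗[K] A →ₗ[K] A ⊗[K] A := lTensor A (mulRight K a)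

/-- The relations defining `A ⊗_B A` as a quotient of `A ⊗[K] A`; working modulo
`relJ f` amounts to working in the tensor square `A ⊗_B A` of the extension `f`. -/
def relJ (f : B →ₐ[K] A) : Submodule K (A ⊗[K] A) :=
  Submodule.span K {z | ∃ x b y, z = (x * f b) ⊗ₜ[K] y - x ⊗ₜ[K] (f b * y)}

/-- `α` is a `B`-`B`-bimodule endomorphism of `A`. -/
def IsBB (f : B →ₐ[K] A) (α : A →ₗ[K] A) : Prop :=
  (∀ b x, α (f b * x) = f b * α x) ∧ (∀ b x, α (x * f b) = α x * f b)

/-- `t` represents a `B`-central element of `A ⊗_B A`. -/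
def IsCent (f : B →ₐ[K] A) (t : A ⊗[K] A) : Prop :=
  ∀ b, lmulT (K := K) (f b) t - rmulT (f b) t ∈ relJ f

/-- `A ⊗_B A` is isomorphic, as a `B`-`A`-bimodule, to a direct summand of `A^N`
for some positive `N`: there is a split mono `ι` (with splitting `π`), both maps
being `B`-`A`-bimodule maps (everything taken modulo the relations `relJ f`). -/
def LeftD2 (f : B →ₐ[K] A) : Prop :=
  ∃ N : ℕ, 0 < N ∧ ∃ (ι : A ⊗[K] A →ₗ[K] (Fin N → A)) (π : (Fin N → A) →ₗ[K] A ⊗[K] A),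
    (∀ z ∈ relJ f, ι z = 0) ∧
    (∀ b z, ι (lmulT (f b) z) = fun i => f b * ι z i) ∧
    (∀ a z, ι (rmulT a z) = fun i => ι z i * a) ∧
    (∀ b (v : Fin N → A), π (fun i => f b * v i) - lmulT (f b) (π v) ∈ relJ f) ∧
    (∀ a (v : Fin N → A), π (fun i => v i * a) - rmulT a (π v) ∈ relJ f) ∧
    (∀ z, π (ι z) - z ∈ relJ f)

/-- `A ⊗_B A` is isomorphic, as an `A`-`B`-bimodule, to a direct summand of `A^N`. -/
def RightD2 (f : B →ₐ[K] A) : Prop :=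
  ∃ N : ℕ, 0 < N ∧ ∃ (ι : A ⊗[K] A →ₗ[K] (Fin N → A)) (π : (Fin N → A) →ₗ[K] A ⊗[K] A),
    (∀ z ∈ relJ f, ι z = 0) ∧
    (∀ a z, ι (lmulT a z) = fun i => a * ι z i) ∧
    (∀ b z, ι (rmulT (f b) z) = fun i => ι z i * f b) ∧
    (∀ a (v : Fin N → A), π (fun i => a * v i) - lmulT a (π v) ∈ relJ f) ∧
    (∀ b (v : Fin N → A), π (fun i => v i * f b) - rmulT (f b) (π v) ∈ relJ f) ∧
    (∀ z, π (ι z) - z ∈ relJ f)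

/-- `A ⊗_B A` is isomorphic, as an `A`-`A`-bimodule, to a direct summand of `A^N`:
H-separability of the extension `f`. -/
def HSep (f : B →ₐ[K] A) : Prop :=
  ∃ N : ℕ, 0 < N ∧ ∃ (ι : A ⊗[K] A →ₗ[K] (Fin N → A)) (π : (Fin N → A) →ₗ[K] A ⊗[K] A),
    (∀ z ∈ relJ f, ι z = 0) ∧
    (∀ a z, ι (lmulT a z) = fun i => a * ι z i) ∧
    (∀ a z, ι (rmulT a z) = fun i => ι z i * a) ∧
    (∀ a (v : Fin N → A), π (fun i => a * v i) - lmulT a (π v) ∈ relJ f) ∧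
    (∀ a (v : Fin N → A), π (fun i => v i * a) - rmulT a (π v) ∈ relJ f) ∧
    (∀ z, π (ι z) - z ∈ relJ f)


/-- `B` is a separable `K`-algebra: it has a separability idempotent. -/
def IsSepAlg (K B : Type*) [CommRing K] [Ring B] [Algebra K B] : Prop :=
  ∃ e : B ⊗[K] B, (LinearMap.mul' K B) e = 1 ∧
    ∀ b : B, ((b ⊗ₜ[K] (1 : B)) * e : B ⊗[K] B) = e * ((1 : B) ⊗ₜ[K] b)

/-!
Matrix units identify `M_n(A) ⊗_{M_n(B)} M_n(A)` with `M_n(A ⊗_B A)`: the `(p, q)` entry of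
`X ⊗ Y` is `∑ₖ X_pk ⊗ Y_kq` (`entryT`), and `x ⊗ y` placed at `(p, q)` comes back as
`x E_po ⊗ y E_oq` (`singleT`). Matrices act on `M_n(A ⊗_B A)` by the usual matrix formulas, so a
split embedding of `A ⊗_B A` into `A^N` compatible with one-sided actions of `S, T ⊆ A` induces,
entrywise, one of the matrix tensor square into `M_n(A)^N` compatible with `M_n(S), M_n(T)`.
Conversely, an embedding for `M_n(A)` restricts to the corner `E_oo M_n(A) E_oo ≅ A`.
Depth two is the case `S, T ∈ {f(B), A}`.
-/

open Matrix

@[simp] lemma lmulT_tmul (a x y : A) : lmulT (K := K) a (x ⊗ₜ y) = (a * x) ⊗ₜ y := rfl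

@[simp] lemma rmulT_tmul (a x y : A) : rmulT (K := K) a (x ⊗ₜ y) = x ⊗ₜ (y * a) := rfl

@[simp] lemma lmulT_zero : lmulT (K := K) (0 : A) = 0 := by
  simp [lmulT]

@[simp] lemma rmulT_zero : rmulT (K := K) (0 : A) = 0 := by
  simp [rmulT]

@[simp] lemma lmulT_one : lmulT (K := K) (1 : A) = LinearMap.id := by
  simp [lmulT]

@[simp] lemma rmulT_one : rmulT (K := K) (1 : A) = LinearMap.id := by
  simp [rmulT]

lemma tmul_sub_tmul_mem_relJ (f : B →ₐ[K] A) (x : A) (b : B) (y : A) :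
    (x * f b) ⊗ₜ[K] y - x ⊗ₜ[K] (f b * y) ∈ relJ f :=
  Submodule.subset_span ⟨x, b, y, rfl⟩

section MatrixFacts

variable {l m n α : Type*}

lemma Matrix.mul_single_eq_sum [Fintype l] [Fintype m] [DecidableEq l] [DecidableEq m]
    [DecidableEq n] [NonUnitalNonAssocSemiring α] (M : Matrix l m α) (j : m) (k : n) (x : α) :
    M * single j k x = ∑ i, single i k (M i j * x) := by
  ext r c
  simp [mul_apply, Matrix.single_apply, Matrix.sum_apply, ite_and, Finset.sum_ite_eq, eq_comm]

lemma Matrix.single_mul_eq_sum [Fintype m] [Fintype n] [DecidableEq l] [DecidableEq m]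
    [DecidableEq n] [NonUnitalNonAssocSemiring α] (M : Matrix m n α) (i : l) (j : m) (y : α) :
    single i j y * M = ∑ k, single i k (y * M j k) := by
  ext r c
  simp [mul_apply, Matrix.single_apply, Matrix.sum_apply, ite_and, Finset.sum_ite_eq, eq_comm]

lemma Matrix.range_map {β : Type*} (g : α → β) :
    Set.range (fun M : Matrix m n α => M.map g) = (Set.range g).matrix := by
  ext M
  refine ⟨by rintro ⟨M, rfl⟩ i j; exact ⟨M i j, rfl⟩, fun hM => ?_⟩
  choose N hN using hM
  exact ⟨of N, ext hN⟩

lemma Set.matrix_univ : (Set.univ : Set α).matrix = (Set.univ : Set (Matrix m n α)) :=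
  Set.eq_univ_of_forall fun _ _ _ => trivial

end MatrixFacts

section MatrixTensor

variable {m : Type*} [Fintype m] [DecidableEq m]

variable (K A) in
def entryT (p q : m) : Matrix m m A ⊗[K] Matrix m m A →ₗ[K] A ⊗[K] A :=
  ∑ k, map (entryLinearMap K A p k) (entryLinearMap K A k q)

variable (K A) in
def singleT (o p q : m) : A ⊗[K] A →ₗ[K] Matrix m m A ⊗[K] Matrix m m A :=
  map (singleLinearMap K p o) (singleLinearMap K o q)

omit [DecidableEq m] in
@[simp] lemma entryT_tmul (p q : m) (X Y : Matrix m m A) :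
    entryT K A p q (X ⊗ₜ Y) = ∑ k, X p k ⊗ₜ Y k q := by
  simp [entryT]

omit [Fintype m] in
@[simp] lemma singleT_tmul (o p q : m) (x y : A) :
    singleT K A o p q (x ⊗ₜ y) = single p o x ⊗ₜ single o q y := rfl

lemma entryT_lmulT (M : Matrix m m A) (p q : m) (z : Matrix m m A ⊗[K] Matrix m m A) :
    entryT K A p q (lmulT M z) = ∑ l, lmulT (M p l) (entryT K A l q z) := by
  induction z using TensorProduct.induction_on with
  | zero => simp
  | tmul X Y =>
    simp only [lmulT_tmul, entryT_tmul, mul_apply, sum_tmul, map_sum]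
    exact Finset.sum_comm
  | add z w hz hw => simp [hz, hw, Finset.sum_add_distrib]

lemma entryT_rmulT (M : Matrix m m A) (p q : m) (z : Matrix m m A ⊗[K] Matrix m m A) :
    entryT K A p q (rmulT M z) = ∑ l, rmulT (M l q) (entryT K A p l z) := by
  induction z using TensorProduct.induction_on with
  | zero => simp
  | tmul X Y =>
    simp only [rmulT_tmul, entryT_tmul, mul_apply, tmul_sum, map_sum]
    exact Finset.sum_comm
  | add z w hz hw => simp [hz, hw, Finset.sum_add_distrib]

lemma entryT_lmulT_single (a : A) (p q : m) (z : Matrix m m A ⊗[K] Matrix m m A) :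
    entryT K A p q (lmulT (single p p a) z) = lmulT a (entryT K A p q z) := by
  rw [entryT_lmulT, Finset.sum_eq_single p (fun l _ hl => by simp [hl.symm]) (by simp)]
  simp

lemma entryT_rmulT_single (a : A) (p q : m) (z : Matrix m m A ⊗[K] Matrix m m A) :
    entryT K A p q (rmulT (single q q a) z) = rmulT a (entryT K A p q z) := by
  rw [entryT_rmulT, Finset.sum_eq_single q (fun l _ hl => by simp [hl.symm]) (by simp)]
  simp

lemma lmulT_singleT (M : Matrix m m A) (o l q : m) (u : A ⊗[K] A) :
    lmulT M (singleT K A o l q u) = ∑ p, singleT K A o p q (lmulT (M p l) u) := by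
  induction u using TensorProduct.induction_on with
  | zero => simp
  | tmul x y => simp [mul_single_eq_sum, sum_tmul]
  | add z w hz hw => simp [hz, hw, Finset.sum_add_distrib]

lemma rmulT_singleT (M : Matrix m m A) (o p l : m) (u : A ⊗[K] A) :
    rmulT M (singleT K A o p l u) = ∑ q, singleT K A o p q (rmulT (M l q) u) := by
  induction u using TensorProduct.induction_on with
  | zero => simp
  | tmul x y => simp [single_mul_eq_sum, tmul_sum]
  | add z w hz hw => simp [hz, hw, Finset.sum_add_distrib]

lemma singleT_lmulT (a : A) (o p q : m) (u : A ⊗[K] A) :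
    singleT K A o p q (lmulT a u) = lmulT (single p p a) (singleT K A o p q u) := by
  induction u using TensorProduct.induction_on with
  | zero => simp
  | tmul x y => simp
  | add z w hz hw => simp [hz, hw]

lemma singleT_rmulT (a : A) (o p q : m) (u : A ⊗[K] A) :
    singleT K A o p q (rmulT a u) = rmulT (single q q a) (singleT K A o p q u) := by
  induction u using TensorProduct.induction_on with
  | zero => simp
  | tmul x y => simp
  | add z w hz hw => simp [hz, hw]

lemma entryT_singleT (o p q : m) (u : A ⊗[K] A) :
    entryT K A p q (singleT K A o p q u) = u := by
  induction u using TensorProduct.induction_on with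
  | zero => simp
  | tmul x y => simp [Matrix.single_apply, ite_tmul]
  | add z w hz hw => simp [hz, hw]

lemma entryT_single_tmul_single (p k l q p' q' : m) (x y : A) :
    entryT K A p' q' (single p k x ⊗ₜ single l q y) =
      if p = p' ∧ k = l ∧ q = q' then x ⊗ₜ y else 0 := by
  by_cases hp : p = p' <;> by_cases hq : q = q' <;> by_cases hkl : k = l <;>
    simp [Matrix.single_apply, hp, hq, hkl, ite_tmul, tmul_ite]

lemma sum_singleT_entryT_single_tmul_single (o p k l q : m) (x y : A) :
    ∑ p', ∑ q', singleT K A o p' q' (entryT K A p' q' (single p k x ⊗ₜ single l q y)) =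
      if k = l then single p o x ⊗ₜ single o q y else 0 := by
  simp only [entryT_single_tmul_single]
  split_ifs with hkl <;> simp [hkl, apply_ite, ite_and, Finset.sum_ite_eq]

end MatrixTensor

section MatrixRelations

variable {m : Type*} [Fintype m] [DecidableEq m] (f : B →ₐ[K] A)

lemma entryT_mem_relJ (p q : m) {z : Matrix m m A ⊗[K] Matrix m m A}
    (hz : z ∈ relJ f.mapMatrix) : entryT K A p q z ∈ relJ f := by
  suffices relJ f.mapMatrix ≤ (relJ f).comap (entryT K A p q) from this hz
  refine Submodule.span_le.mpr ?_
  rintro _ ⟨X, b, Y, rfl⟩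
  have h : entryT K A p q ((X * f.mapMatrix b) ⊗ₜ Y - X ⊗ₜ (f.mapMatrix b * Y)) =
      ∑ l, ∑ k, ((X p l * f (b l k)) ⊗ₜ Y k q - X p l ⊗ₜ (f (b l k) * Y k q)) := by
    simp only [map_sub, entryT_tmul, mul_apply, AlgHom.mapMatrix_apply, map_apply, sum_tmul,
      tmul_sum, Finset.sum_sub_distrib]
    rw [Finset.sum_comm]
  rw [SetLike.mem_coe, Submodule.mem_comap, h]
  exact Submodule.sum_mem _ fun l _ => Submodule.sum_mem _ fun k _ =>
    tmul_sub_tmul_mem_relJ f _ _ _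

lemma singleT_mem_relJ (o p q : m) {u : A ⊗[K] A} (hu : u ∈ relJ f) :
    singleT K A o p q u ∈ relJ f.mapMatrix := by
  suffices relJ f ≤ (relJ f.mapMatrix).comap (singleT K A o p q) from this hu
  refine Submodule.span_le.mpr ?_
  rintro _ ⟨x, b, y, rfl⟩
  have h := tmul_sub_tmul_mem_relJ f.mapMatrix (single p o x) (single o o b) (single o q y)
  simpa [AlgHom.mapMatrix_apply] using h

/-- `x E_pk ⊗ y E_lq ≡ x E_po ⊗ E_ok y E_lq` as `E_ok ∈ M_n(f(B))`; and `E_ok E_lq = δ_kl E_oq`. -/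
lemma single_tmul_single_sub_mem_relJ (o p k l q : m) (x y : A) :
    single p k x ⊗ₜ[K] single l q y -
      (if k = l then single p o x ⊗ₜ single o q y else 0) ∈ relJ f.mapMatrix := by
  have h := tmul_sub_tmul_mem_relJ f.mapMatrix (single p o x) (single o k 1) (single l q y)
  by_cases hkl : k = l
  · subst hkl
    simpa [AlgHom.mapMatrix_apply] using h
  · simpa [AlgHom.mapMatrix_apply, hkl] using h

lemma sum_singleT_entryT_sub_mem_relJ (o : m) (z : Matrix m m A ⊗[K] Matrix m m A) :
    ∑ p, ∑ q, singleT K A o p q (entryT K A p q z) - z ∈ relJ f.mapMatrix := by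
  let Φ := ∑ p, ∑ q, singleT K A o p q ∘ₗ entryT K A p q
  suffices z ∈ (relJ f.mapMatrix).comap (Φ - LinearMap.id) by simpa [Φ] using this
  induction z using TensorProduct.induction_on with
  | zero => exact zero_mem _
  | add z w hz hw => exact add_mem hz hw
  | tmul X Y =>
    induction X using Matrix.induction_on' with
    | h_zero => simp
    | h_add X X' hX hX' => rw [add_tmul]; exact add_mem hX hX'
    | h_std_basis p k x =>
      induction Y using Matrix.induction_on' with
      | h_zero => simp
      | h_add Y Y' hY hY' => rw [tmul_add]; exact add_mem hY hY'
      | h_std_basis l q y =>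
        have h := Submodule.neg_mem _ (single_tmul_single_sub_mem_relJ f o p k l q x y)
        rw [neg_sub, ← sum_singleT_entryT_single_tmul_single (K := K)] at h
        simpa [Φ] using h

end MatrixRelations

def TensorSqSummand (f : B →ₐ[K] A) (S T : Set A) : Prop :=
  ∃ N : ℕ, 0 < N ∧
    ∃ (ι : A ⊗[K] A →ₗ[K] (Fin N → A)) (π : (Fin N → A) →ₗ[K] A ⊗[K] A),
    (∀ z ∈ relJ f, ι z = 0) ∧
    (∀ a ∈ S, ∀ z, ι (lmulT a z) = fun i => a * ι z i) ∧
    (∀ a ∈ T, ∀ z, ι (rmulT a z) = fun i => ι z i * a) ∧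
    (∀ a ∈ S, ∀ v : Fin N → A, π (fun i => a * v i) - lmulT a (π v) ∈ relJ f) ∧
    (∀ a ∈ T, ∀ v : Fin N → A, π (fun i => v i * a) - rmulT a (π v) ∈ relJ f) ∧
    (∀ z, π (ι z) - z ∈ relJ f)

lemma leftD2_iff_tensorSqSummand (f : B →ₐ[K] A) :
    LeftD2 f ↔ TensorSqSummand f (Set.range f) Set.univ := by
  simp [LeftD2, TensorSqSummand]

lemma rightD2_iff_tensorSqSummand (f : B →ₐ[K] A) :
    RightD2 f ↔ TensorSqSummand f Set.univ (Set.range f) := by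
  simp [RightD2, TensorSqSummand]

section MatrixAmplification

variable {m : Type*} [Fintype m] [DecidableEq m] {I : Type*} {f : B →ₐ[K] A}

def matrixInc (ι : A ⊗[K] A →ₗ[K] (I → A)) :
    Matrix m m A ⊗[K] Matrix m m A →ₗ[K] (I → Matrix m m A) where
  toFun z i := of fun p q => ι (entryT K A p q z) i
  map_add' z w := by ext; simp
  map_smul' c z := by ext; simp

def matrixProj (o : m) (π : (I → A) →ₗ[K] A ⊗[K] A) :
    (I → Matrix m m A) →ₗ[K] Matrix m m A ⊗[K] Matrix m m A :=
  ∑ p, ∑ q, singleT K A o p q ∘ₗ π ∘ₗ (entryLinearMap K A p q).compLeft I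

omit [DecidableEq m] in
@[simp] lemma matrixInc_apply (ι : A ⊗[K] A →ₗ[K] (I → A))
    (z : Matrix m m A ⊗[K] Matrix m m A) (i : I) (p q : m) :
    matrixInc ι z i p q = ι (entryT K A p q z) i := rfl

lemma matrixProj_apply (o : m) (π : (I → A) →ₗ[K] A ⊗[K] A) (v : I → Matrix m m A) :
    matrixProj o π v = ∑ p, ∑ q, singleT K A o p q (π fun i => v i p q) := by
  simp only [matrixProj, LinearMap.sum_apply, LinearMap.comp_apply]
  rfl

lemma matrixInc_eq_zero_of_mem_relJ {ι : A ⊗[K] A →ₗ[K] (I → A)}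
    (hι : ∀ z ∈ relJ f, ι z = 0) {z : Matrix m m A ⊗[K] Matrix m m A}
    (hz : z ∈ relJ f.mapMatrix) : matrixInc ι z = 0 := by
  ext i p q
  simp [hι _ (entryT_mem_relJ f p q hz)]

lemma matrixInc_lmulT {S : Set A} {ι : A ⊗[K] A →ₗ[K] (I → A)}
    (hι : ∀ a ∈ S, ∀ z, ι (lmulT a z) = fun i => a * ι z i) {M : Matrix m m A}
    (hM : M ∈ S.matrix) (z : Matrix m m A ⊗[K] Matrix m m A) :
    matrixInc ι (lmulT M z) = fun i => M * matrixInc ι z i := by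
  ext i p q
  simp [entryT_lmulT, mul_apply, hι _ (hM _ _)]

lemma matrixInc_rmulT {T : Set A} {ι : A ⊗[K] A →ₗ[K] (I → A)}
    (hι : ∀ a ∈ T, ∀ z, ι (rmulT a z) = fun i => ι z i * a) {M : Matrix m m A}
    (hM : M ∈ T.matrix) (z : Matrix m m A ⊗[K] Matrix m m A) :
    matrixInc ι (rmulT M z) = fun i => matrixInc ι z i * M := by
  ext i p q
  simp [entryT_rmulT, mul_apply, hι _ (hM _ _)]

lemma matrixProj_mul_left_sub_mem_relJ (o : m) {S : Set A} {π : (I → A) →ₗ[K] A ⊗[K] A}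
    (hπ : ∀ a ∈ S, ∀ v : I → A, π (fun i => a * v i) - lmulT a (π v) ∈ relJ f)
    {M : Matrix m m A} (hM : M ∈ S.matrix) (v : I → Matrix m m A) :
    matrixProj o π (fun i => M * v i) - lmulT M (matrixProj o π v) ∈ relJ f.mapMatrix := by
  have hMv : matrixProj o π (fun i => M * v i) =
      ∑ p, ∑ q, ∑ l, singleT K A o p q (π fun i => M p l * v i l q) := by
    simp only [matrixProj_apply, ← map_sum]
    congr! with p q i
    simp [mul_apply]
  have hMπ : lmulT M (matrixProj o π v) =
      ∑ p, ∑ q, ∑ l, singleT K A o p q (lmulT (M p l) (π fun i => v i l q)) := by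
    simp only [matrixProj_apply, map_sum, lmulT_singleT]
    exact Finset.sum_comm.trans <| (Finset.sum_congr rfl fun _ _ => Finset.sum_comm).trans
      Finset.sum_comm
  rw [hMv, hMπ, ← Finset.sum_sub_distrib]
  refine Submodule.sum_mem _ fun p _ => ?_
  rw [← Finset.sum_sub_distrib]
  refine Submodule.sum_mem _ fun q _ => ?_
  rw [← Finset.sum_sub_distrib]
  exact Submodule.sum_mem _ fun l _ => by
    rw [← map_sub]; exact singleT_mem_relJ f o p q (hπ _ (hM p l) _)

lemma matrixProj_mul_right_sub_mem_relJ (o : m) {T : Set A} {π : (I → A) →ₗ[K] A ⊗[K] A}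
    (hπ : ∀ a ∈ T, ∀ v : I → A, π (fun i => v i * a) - rmulT a (π v) ∈ relJ f)
    {M : Matrix m m A} (hM : M ∈ T.matrix) (v : I → Matrix m m A) :
    matrixProj o π (fun i => v i * M) - rmulT M (matrixProj o π v) ∈ relJ f.mapMatrix := by
  have hvM : matrixProj o π (fun i => v i * M) =
      ∑ p, ∑ q, ∑ l, singleT K A o p q (π fun i => v i p l * M l q) := by
    simp only [matrixProj_apply, ← map_sum]
    congr! with p q i
    simp [mul_apply]
  have hπM : rmulT M (matrixProj o π v) =
      ∑ p, ∑ q, ∑ l, singleT K A o p q (rmulT (M l q) (π fun i => v i p l)) := by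
    simp only [matrixProj_apply, map_sum, rmulT_singleT]
    exact Finset.sum_congr rfl fun _ _ => Finset.sum_comm
  rw [hvM, hπM, ← Finset.sum_sub_distrib]
  refine Submodule.sum_mem _ fun p _ => ?_
  rw [← Finset.sum_sub_distrib]
  refine Submodule.sum_mem _ fun q _ => ?_
  rw [← Finset.sum_sub_distrib]
  exact Submodule.sum_mem _ fun l _ => by
    rw [← map_sub]; exact singleT_mem_relJ f o p q (hπ _ (hM l q) _)

lemma matrixProj_matrixInc_sub_mem_relJ (o : m) {ι : A ⊗[K] A →ₗ[K] (I → A)}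
    {π : (I → A) →ₗ[K] A ⊗[K] A} (hπι : ∀ z, π (ι z) - z ∈ relJ f)
    (z : Matrix m m A ⊗[K] Matrix m m A) :
    matrixProj o π (matrixInc ι z) - z ∈ relJ f.mapMatrix := by
  have h : matrixProj o π (matrixInc ι z) - z =
      ∑ p, ∑ q, singleT K A o p q (π (ι (entryT K A p q z)) - entryT K A p q z) +
        (∑ p, ∑ q, singleT K A o p q (entryT K A p q z) - z) := by
    simp only [matrixProj_apply, matrixInc_apply, map_sub, Finset.sum_sub_distrib]
    abel
  rw [h]
  exact add_mem (Submodule.sum_mem _ fun p _ => Submodule.sum_mem _ fun q _ =>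
    singleT_mem_relJ f o p q (hπι _)) (sum_singleT_entryT_sub_mem_relJ f o z)

end MatrixAmplification

section Corner

variable {m : Type*} [Fintype m] [DecidableEq m] {I : Type*} {f : B →ₐ[K] A} (o : m)

def cornerInc (ι : Matrix m m A ⊗[K] Matrix m m A →ₗ[K] (I → Matrix m m A)) :
    A ⊗[K] A →ₗ[K] (I → A) :=
  (entryLinearMap K A o o).compLeft I ∘ₗ ι ∘ₗ singleT K A o o o

def cornerProj (π : (I → Matrix m m A) →ₗ[K] Matrix m m A ⊗[K] Matrix m m A) :
    (I → A) →ₗ[K] A ⊗[K] A :=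
  entryT K A o o ∘ₗ π ∘ₗ (singleLinearMap K o o).compLeft I

omit [Fintype m] in
@[simp] lemma cornerInc_apply (ι : Matrix m m A ⊗[K] Matrix m m A →ₗ[K] (I → Matrix m m A))
    (z : A ⊗[K] A) (i : I) : cornerInc o ι z i = ι (singleT K A o o o z) i o o := rfl

@[simp] lemma cornerProj_apply
    (π : (I → Matrix m m A) →ₗ[K] Matrix m m A ⊗[K] Matrix m m A) (v : I → A) :
    cornerProj o π v = entryT K A o o (π fun i => single o o (v i)) := rfl

lemma cornerInc_eq_zero_of_mem_relJ
    {ι : Matrix m m A ⊗[K] Matrix m m A →ₗ[K] (I → Matrix m m A)}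
    (hι : ∀ z ∈ relJ f.mapMatrix, ι z = 0) {z : A ⊗[K] A} (hz : z ∈ relJ f) :
    cornerInc o ι z = 0 := by
  ext i
  simp [hι _ (singleT_mem_relJ f o o o hz)]

lemma cornerInc_lmulT {S : Set (Matrix m m A)}
    {ι : Matrix m m A ⊗[K] Matrix m m A →ₗ[K] (I → Matrix m m A)}
    (hι : ∀ M ∈ S, ∀ z, ι (lmulT M z) = fun i => M * ι z i) {a : A}
    (ha : single o o a ∈ S)
    (z : A ⊗[K] A) : cornerInc o ι (lmulT a z) = fun i => a * cornerInc o ι z i := by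
  ext i
  simp [singleT_lmulT, hι _ ha]

lemma cornerInc_rmulT {T : Set (Matrix m m A)}
    {ι : Matrix m m A ⊗[K] Matrix m m A →ₗ[K] (I → Matrix m m A)}
    (hι : ∀ M ∈ T, ∀ z, ι (rmulT M z) = fun i => ι z i * M) {a : A}
    (ha : single o o a ∈ T)
    (z : A ⊗[K] A) : cornerInc o ι (rmulT a z) = fun i => cornerInc o ι z i * a := by
  ext i
  simp [singleT_rmulT, hι _ ha]

lemma cornerProj_mul_left_sub_mem_relJ {S : Set (Matrix m m A)}
    {π : (I → Matrix m m A) →ₗ[K] Matrix m m A ⊗[K] Matrix m m A}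
    (hπ : ∀ M ∈ S, ∀ v : I → Matrix m m A,
      π (fun i => M * v i) - lmulT M (π v) ∈ relJ f.mapMatrix)
    {a : A} (ha : single o o a ∈ S) (v : I → A) :
    cornerProj o π (fun i => a * v i) - lmulT a (cornerProj o π v) ∈ relJ f := by
  have h := entryT_mem_relJ f o o (hπ _ ha fun i => single o o (v i))
  simpa [entryT_lmulT_single] using h

lemma cornerProj_mul_right_sub_mem_relJ {T : Set (Matrix m m A)}
    {π : (I → Matrix m m A) →ₗ[K] Matrix m m A ⊗[K] Matrix m m A}
    (hπ : ∀ M ∈ T, ∀ v : I → Matrix m m A,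
      π (fun i => v i * M) - rmulT M (π v) ∈ relJ f.mapMatrix)
    {a : A} (ha : single o o a ∈ T) (v : I → A) :
    cornerProj o π (fun i => v i * a) - rmulT a (cornerProj o π v) ∈ relJ f := by
  have h := entryT_mem_relJ f o o (hπ _ ha fun i => single o o (v i))
  simpa [entryT_rmulT_single] using h

/-- `E_oo` fixes `singleT o o o z` on both sides, so `ι` sends it into the `(o, o)` corner. -/
lemma single_cornerInc {ι : Matrix m m A ⊗[K] Matrix m m A →ₗ[K] (I → Matrix m m A)}
    (hl : ∀ z, ι (lmulT (single o o 1) z) = fun i => single o o 1 * ι z i)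
    (hr : ∀ z, ι (rmulT (single o o 1) z) = fun i => ι z i * single o o 1) (z : A ⊗[K] A) :
    (fun i => single o o (cornerInc o ι z i)) = ι (singleT K A o o o z) := by
  have h : singleT K A o o o z =
      lmulT (single o o 1) (rmulT (single o o 1) (singleT K A o o o z)) := by
    rw [← singleT_rmulT, ← singleT_lmulT, lmulT_one, rmulT_one, id_apply, id_apply]
  conv_rhs => rw [h, hl, hr]
  ext i : 1
  simp [← mul_assoc]

lemma cornerProj_cornerInc_sub_mem_relJ
    {ι : Matrix m m A ⊗[K] Matrix m m A →ₗ[K] (I → Matrix m m A)}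
    {π : (I → Matrix m m A) →ₗ[K] Matrix m m A ⊗[K] Matrix m m A}
    (hl : ∀ z, ι (lmulT (single o o 1) z) = fun i => single o o 1 * ι z i)
    (hr : ∀ z, ι (rmulT (single o o 1) z) = fun i => ι z i * single o o 1)
    (hπι : ∀ z, π (ι z) - z ∈ relJ f.mapMatrix) (z : A ⊗[K] A) :
    cornerProj o π (cornerInc o ι z) - z ∈ relJ f := by
  have h := entryT_mem_relJ f o o (hπι (singleT K A o o o z))
  rwa [map_sub, entryT_singleT, ← single_cornerInc o hl hr] at h

end Corner

section Transfer

variable {m : Type*} [Fintype m] [DecidableEq m] {f : B →ₐ[K] A} {S T : Set A}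

theorem TensorSqSummand.matrix (o : m) (h : TensorSqSummand f S T) :
    TensorSqSummand f.mapMatrix (S.matrix : Set (Matrix m m A)) T.matrix := by
  obtain ⟨N, hN, ι, π, hι, hιl, hιr, hπl, hπr, hπι⟩ := h
  exact ⟨N, hN, matrixInc ι, matrixProj o π, fun _ => matrixInc_eq_zero_of_mem_relJ hι,
    fun _ => matrixInc_lmulT hιl, fun _ => matrixInc_rmulT hιr,
    fun _ => matrixProj_mul_left_sub_mem_relJ o hπl,
    fun _ => matrixProj_mul_right_sub_mem_relJ o hπr, matrixProj_matrixInc_sub_mem_relJ o hπι⟩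

theorem TensorSqSummand.of_matrix (o : m) (h0S : 0 ∈ S) (h1S : 1 ∈ S) (h0T : 0 ∈ T)
    (h1T : 1 ∈ T) (h : TensorSqSummand f.mapMatrix (S.matrix : Set (Matrix m m A)) T.matrix) :
    TensorSqSummand f S T := by
  obtain ⟨N, hN, ι, π, hι, hιl, hιr, hπl, hπr, hπι⟩ := h
  have hS : ∀ a ∈ S, single o o a ∈ S.matrix := fun _ => (single_mem_matrix h0S).2
  have hT : ∀ a ∈ T, single o o a ∈ T.matrix := fun _ => (single_mem_matrix h0T).2
  exact ⟨N, hN, cornerInc o ι, cornerProj o π, fun _ => cornerInc_eq_zero_of_mem_relJ o hι,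
    fun a ha => cornerInc_lmulT o hιl (hS a ha), fun a ha => cornerInc_rmulT o hιr (hT a ha),
    fun a ha => cornerProj_mul_left_sub_mem_relJ o hπl (hS a ha),
    fun a ha => cornerProj_mul_right_sub_mem_relJ o hπr (hT a ha),
    cornerProj_cornerInc_sub_mem_relJ o (hιl _ (hS 1 h1S)) (hιr _ (hT 1 h1T)) hπι⟩

theorem tensorSqSummand_mapMatrix_iff [Nonempty m] (h0S : 0 ∈ S) (h1S : 1 ∈ S) (h0T : 0 ∈ T)
    (h1T : 1 ∈ T) :
    TensorSqSummand f.mapMatrix (S.matrix : Set (Matrix m m A)) T.matrix ↔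
      TensorSqSummand f S T :=
  ⟨.of_matrix (Classical.arbitrary m) h0S h1S h0T h1T, .matrix (Classical.arbitrary m)⟩

end Transfer

section D2

variable {m : Type*} [Fintype m] [DecidableEq m] (f : B →ₐ[K] A)

lemma AlgHom.range_mapMatrix : Set.range (f.mapMatrix (m := m)) = (Set.range f).matrix :=
  Matrix.range_map f

theorem leftD2_mapMatrix_iff [Nonempty m] : LeftD2 (f.mapMatrix (m := m)) ↔ LeftD2 f := by
  rw [leftD2_iff_tensorSqSummand, leftD2_iff_tensorSqSummand, AlgHom.range_mapMatrix,
    ← Set.matrix_univ]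
  exact tensorSqSummand_mapMatrix_iff ⟨0, map_zero f⟩ ⟨1, map_one f⟩ trivial trivial

theorem rightD2_mapMatrix_iff [Nonempty m] : RightD2 (f.mapMatrix (m := m)) ↔ RightD2 f := by
  rw [rightD2_iff_tensorSqSummand, rightD2_iff_tensorSqSummand, AlgHom.range_mapMatrix,
    ← Set.matrix_univ]
  exact tensorSqSummand_mapMatrix_iff trivial trivial ⟨0, map_zero f⟩ ⟨1, map_one f⟩

end D2

theorem d2_iff_matrix_d2_general (k : Type*) [Field k]
    {A B : Type*} [Ring A] [Ring B] [Algebra k A] [Algebra k B]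
    (f : B →ₐ[k] A)
    (n : ℕ) [NeZero n] :
    (LeftD2 f ∧ RightD2 f) ↔
      (LeftD2 (AlgHom.mapMatrix f (m := Fin n)) ∧
        RightD2 (AlgHom.mapMatrix f (m := Fin n))) := by
  rw [leftD2_mapMatrix_iff, rightD2_mapMatrix_iff]

/-- let `B` be a separable finite-dimensional algebra over a field `K`.
Then `A | B` is depth two iff `M_n(A) | M_n(B)` is depth two. -/
theorem d2_iff_matrix_d2 (k : Type*) [Field k]
    {A B : Type*} [Ring A] [Ring B] [Algebra k A] [Algebra k B]
    [FiniteDimensional k B] (hB : IsSepAlg k B) (f : B →ₐ[k] A)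
    (n : ℕ) [NeZero n] :
    (LeftD2 f ∧ RightD2 f) ↔
      (LeftD2 (AlgHom.mapMatrix f (m := Fin n)) ∧
        RightD2 (AlgHom.mapMatrix f (m := Fin n))) :=
  d2_iff_matrix_d2_general k f n

end
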